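/- arXiv:2204.09264 — 4 statements merged into one kernel-verified Lean document; each statement's English description precedes it below -/
import Mathlib

section
/- Let M be a positive affine monoid (a finitely generated submonoid of ℤ^d whose only unit is 0). Then every nonzero element of M has a finite maximal decomposition length into nonzero elements, and the set of indecomposable elements (the Hilbert basis) is finite and generates M. -/
/-- The set of lengths of decompositions of `m` into nonzero elements of `M`. -/
def decompLengths {d : ℕ} (M : AddSubmonoid (Fin d → ℤ)) (m : Fin d → ℤ) : Set ℕ :=
  {n | ∃ l : List (Fin d → ℤ), l.length = n ∧ (∀ x ∈ l, x ∈ M ∧ x ≠ 0) ∧ l.sum = m}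

/-- The set of indecomposable (nonzero) elements of `M`: the Hilbert basis. -/
def hilbertBasis {d : ℕ} (M : AddSubmonoid (Fin d → ℤ)) : Set (Fin d → ℤ) :=
  {m | m ∈ M ∧ m ≠ 0 ∧ ∀ a ∈ M, ∀ b ∈ M, a + b = m → a = 0 ∨ b = 0}

/-!
Regard `M` as an abstract cancellative monoid whose only unit is `0`. Its irreducible elements
lie in every generating set and generate it, and they are exactly the Hilbert basis; this gives
the last two claims.

For the decomposition lengths, fix finitely many nonzero generators `v i`. The representations
`c : ι → ℕ` of a fixed `m` form an antichain of `ι → ℕ`: if `c ≤ c'`, then `c' - c` represents `0`,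
which forces `c' - c = 0` as `M` has no nontrivial units. By Dickson's lemma there are finitely
many of them, and a decomposition of `m` into `n` nonzero summands yields a representation with
`∑ i, c i ≥ n`.
-/

open Finset

instance AddSubmonoid.instAddCancelCommMonoid {G : Type*} [AddCancelCommMonoid G]
    (M : AddSubmonoid G) : AddCancelCommMonoid M := {}

theorem AddSubmonoid.subsingleton_addUnits {G : Type*} [AddCommGroup G] {M : AddSubmonoid G}
    (hpos : ∀ m ∈ M, -m ∈ M → m = 0) : Subsingleton (AddUnits M) := by
  refine Subsingleton.addUnits_of_isAddUnit fun a ⟨u, hu⟩ => Subtype.ext (hpos a a.2 ?_)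
  have h : ((u : M) : G) + ((↑(-u) : M) : G) = 0 := by
    rw [← AddSubmonoid.coe_add, AddUnits.add_neg]
    rfl
  rw [← hu, neg_eq_of_add_eq_zero_right h]
  exact (↑(-u) : M).2

theorem AddMonoid.FG.exists_finset_zero_notMem_closure_eq_top (N : Type*) [AddMonoid N]
    [AddMonoid.FG N] : ∃ S : Finset N, 0 ∉ S ∧ AddSubmonoid.closure (S : Set N) = ⊤ := by
  classical
  obtain ⟨S, hS⟩ := AddMonoid.fg_def.1 ‹_›
  refine ⟨S.erase 0, notMem_erase 0 S, ?_⟩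
  rw [coe_erase, AddSubmonoid.closure_sdiff_eq_closure (by simp), hS]

theorem finite_preimage_singleton_of_map_eq_zero {A H F : Type*} [AddCommMonoid A]
    [PartialOrder A] [CanonicallyOrderedAdd A] [WellQuasiOrderedLE A] [AddCancelCommMonoid H]
    [FunLike F A H] [AddMonoidHomClass F A H] (f : F) (hf : ∀ a, f a = 0 → a = 0) (h : H) :
    (f ⁻¹' {h}).Finite := by
  refine WellQuasiOrderedLE.finite_of_isAntichain fun a ha b hb hab hle => hab ?_
  obtain ⟨c, rfl⟩ := exists_add_of_le hle
  have hc : f c = 0 := by simpa using (ha.trans hb.symm : f a = f (a + c))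
  simp [hf c hc]

section LinearCombination

variable {N : Type*} [AddCommMonoid N] {ι : Type*} [Fintype ι] {v : ι → N}

theorem eq_zero_of_linearCombination_eq_zero [Subsingleton (AddUnits N)] (hv : ∀ i, v i ≠ 0)
    {c : ι → ℕ} (hc : Fintype.linearCombination ℕ v c = 0) : c = 0 := by
  rw [Fintype.linearCombination_apply, sum_eq_zero_iff] at hc
  funext i
  by_contra hci
  obtain ⟨k, hk⟩ := Nat.exists_eq_succ_of_ne_zero hci
  have hi := hc i (mem_univ i)
  rw [hk, succ_nsmul'] at hi
  exact hv i (eq_zero_of_add_right hi)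

theorem exists_linearCombination_eq_sum_length_le (hv : AddSubmonoid.closure (Set.range v) = ⊤)
    (l : List N) (hl : ∀ x ∈ l, x ≠ 0) :
    ∃ c : ι → ℕ, Fintype.linearCombination ℕ v c = l.sum ∧ l.length ≤ ∑ i, c i := by
  induction l with
  | nil => exact ⟨0, by simp⟩
  | cons x l ih =>
    obtain ⟨c, hc, hlen⟩ := ih fun y hy => hl y (List.mem_cons_of_mem x hy)
    obtain ⟨cx, hcx⟩ :=
      AddSubmonoid.mem_closure_range_iff_of_fintype.1 (hv ▸ AddSubmonoid.mem_top x)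
    have hcx_pos : 0 < ∑ i, cx i := by
      rw [Nat.pos_iff_ne_zero, Ne, sum_eq_zero_iff]
      intro hcx_zero
      exact hl x List.mem_cons_self (by simp [hcx, hcx_zero])
    refine ⟨cx + c, ?_, ?_⟩
    · rw [map_add, hc, List.sum_cons, Fintype.linearCombination_apply, hcx]
    · simp only [Pi.add_apply, sum_add_distrib, List.length_cons]
      omega

end LinearCombination

theorem exists_forall_length_le_of_sum_eq {N : Type*} [AddCancelCommMonoid N]
    [Subsingleton (AddUnits N)] [AddMonoid.FG N] (m : N) :
    ∃ B, ∀ l : List N, (∀ x ∈ l, x ≠ 0) → l.sum = m → l.length ≤ B := by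
  obtain ⟨S, hS0, hS⟩ := AddMonoid.FG.exists_finset_zero_notMem_closure_eq_top N
  let v : S → N := Subtype.val
  have hv : AddSubmonoid.closure (Set.range v) = ⊤ := by simpa [v] using hS
  have hfiber := finite_preimage_singleton_of_map_eq_zero (Fintype.linearCombination ℕ v)
    (fun c => eq_zero_of_linearCombination_eq_zero fun i => ne_of_mem_of_not_mem i.2 hS0) m
  obtain ⟨B, hB⟩ := (hfiber.image fun c => ∑ i, c i).bddAbove
  refine ⟨B, fun l hl hsum => ?_⟩
  obtain ⟨c, hc, hlen⟩ := exists_linearCombination_eq_sum_length_le hv l hl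
  exact hlen.trans (hB ⟨c, hc.trans hsum, rfl⟩)

section AffineMonoid

variable {d : ℕ} {M : AddSubmonoid (Fin d → ℤ)}

theorem bddAbove_decompLengths (hfg : M.FG) (hpos : ∀ m ∈ M, -m ∈ M → m = 0)
    {m : Fin d → ℤ} (hm : m ∈ M) : BddAbove (decompLengths M m) := by
  have := (AddMonoid.fg_iff_addSubmonoid_fg M).2 hfg
  have := AddSubmonoid.subsingleton_addUnits hpos
  obtain ⟨B, hB⟩ := exists_forall_length_le_of_sum_eq (⟨m, hm⟩ : M)
  refine ⟨B, ?_⟩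
  rintro n ⟨l, rfl, hl, hsum⟩
  lift l to List M using fun x hx => (hl x hx).1
  rw [List.length_map]
  refine hB l (fun x hx h0 => (hl x (List.mem_map_of_mem hx)).2 (by simp [h0])) ?_
  exact Subtype.ext ((M.coe_list_sum l).trans hsum)

theorem exists_isGreatest_decompLengths (hfg : M.FG) (hpos : ∀ m ∈ M, -m ∈ M → m = 0)
    {m : Fin d → ℤ} (hm : m ∈ M) (hm0 : m ≠ 0) : ∃ n, IsGreatest (decompLengths M m) n :=
  (bddAbove_decompLengths hfg hpos hm).exists_isGreatest_of_nonempty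
    ⟨1, [m], rfl, by simp [hm, hm0], by simp⟩

theorem hilbertBasis_eq_image_addIrreducible (hpos : ∀ m ∈ M, -m ∈ M → m = 0) :
    hilbertBasis M = M.subtype '' {p : M | AddIrreducible p} := by
  have := AddSubmonoid.subsingleton_addUnits hpos
  ext x
  constructor
  · rintro ⟨hxM, hx0, hind⟩
    refine ⟨⟨x, hxM⟩, ⟨fun h => hx0 ?_, fun a b hab => ?_⟩, rfl⟩
    · simpa using h.eq_zero
    · simpa [← ZeroMemClass.coe_eq_zero] using
        hind a a.2 b b.2 (congrArg Subtype.val hab).symm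
  · rintro ⟨p, hp, rfl⟩
    refine ⟨p.2, fun h => hp.ne_zero (Subtype.ext h), fun a ha b hb hab => ?_⟩
    simpa using hp.isAddUnit_or_isAddUnit (a := ⟨a, ha⟩) (b := ⟨b, hb⟩) (Subtype.ext hab.symm)

end AffineMonoid

/-- For a positive affine monoid `M ⊆ ℤ^d` (finitely generated, only
unit `0`): every nonzero element has a finite maximal decomposition length, and
the set of indecomposable elements is finite and generates `M`. -/
theorem positive_affine_monoid_hilbert {d : ℕ} (M : AddSubmonoid (Fin d → ℤ))
    (hfg : M.FG) (hpos : ∀ m ∈ M, -m ∈ M → m = 0) :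
    (∀ m ∈ M, m ≠ 0 → ∃ n : ℕ, IsGreatest (decompLengths M m) n) ∧
    (hilbertBasis M).Finite ∧
    AddSubmonoid.closure (hilbertBasis M) = M := by
  have := (AddMonoid.fg_iff_addSubmonoid_fg M).2 hfg
  have := AddSubmonoid.subsingleton_addUnits hpos
  refine ⟨fun m hm hm0 => exists_isGreatest_decompLengths hfg hpos hm hm0, ?_, ?_⟩
  · rw [hilbertBasis_eq_image_addIrreducible hpos]
    exact finite_addIrreducible.image _
  · rw [hilbertBasis_eq_image_addIrreducible hpos, ← AddMonoidHom.map_mclosure,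
      AddSubmonoid.closure_addIrreducible, ← AddMonoidHom.mrange_eq_map,
      AddSubmonoid.mrange_subtype]
end

section
/- Let D₁, D₂ ⊆ ℝ^d be pointed cones sharing a common facet F, lying on opposite sides of the hyperplane ℝF, and let γ ∈ int(F) be nonzero. Let x₁,…,x_m and y₁,…,y_n be generators of the extremal rays of D₁ resp. D₂ not in F. If for every pair (i,j) the segment [xᵢ, yⱼ] meets int(F), then D₁ ∪ D₂ is convex (hence a cone). -/
open scoped BigOperators

private theorem cone_aux {d m n : ℕ}
    (h : (Fin d → ℝ) →ₗ[ℝ] ℝ)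
    (F : Set (Fin d → ℝ))
    (hFconv : Convex ℝ F) (hFcone : ∀ c : ℝ, 0 ≤ c → ∀ z ∈ F, c • z ∈ F)
    (x : Fin m → (Fin d → ℝ)) (y : Fin n → (Fin d → ℝ))
    (hx : ∀ i, 0 < h (x i)) (hy : ∀ j, h (y j) < 0)
    (hw : ∀ i j, (-(h (y j))) • x i + (h (x i)) • y j ∈ F)
    (f : Fin d → ℝ) (hf : f ∈ F)
    (μ : Fin m → ℝ) (lam : Fin n → ℝ)
    (hμ : ∀ i, 0 ≤ μ i) (hlam : ∀ j, 0 ≤ lam j)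
    (hAB : ∑ j, lam j * (-(h (y j))) ≤ ∑ i, μ i * h (x i)) :
    ∃ f' ∈ F, ∃ c : Fin m → ℝ, (∀ i, 0 ≤ c i) ∧
      f + ∑ i, μ i • x i + ∑ j, lam j • y j = f' + ∑ i, c i • x i := by
  set A := ∑ i, μ i * h (x i) with hA
  set B := ∑ j, lam j * (-(h (y j))) with hB
  have hA0 : 0 ≤ A :=
    Finset.sum_nonneg fun i _ => mul_nonneg (hμ i) (hx i).le
  have hB0 : 0 ≤ B :=
    Finset.sum_nonneg fun j _ => mul_nonneg (hlam j) (by linarith [hy j])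
  rcases eq_or_lt_of_le hA0 with hA0' | hApos
  · -- A = 0, hence all μ = 0 and all lam = 0
    have hμ0 : ∀ i, μ i = 0 := by
      intro i
      have := (Finset.sum_eq_zero_iff_of_nonneg
        (fun i _ => mul_nonneg (hμ i) (hx i).le)).1 hA0'.symm i (Finset.mem_univ i)
      have hxi := hx i
      nlinarith [hμ i]
    have hB0' : B = 0 := le_antisymm (by linarith) hB0
    have hlam0 : ∀ j, lam j = 0 := by
      intro j
      have := (Finset.sum_eq_zero_iff_of_nonneg
        (fun j _ => mul_nonneg (hlam j) (by linarith [hy j]))).1 hB0' j (Finset.mem_univ j)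
      have hyj := hy j
      nlinarith [hlam j]
    refine ⟨f, hf, fun _ => 0, fun _ => le_rfl, ?_⟩
    simp [hμ0, hlam0]
  · -- A > 0
    have h0F : (0 : Fin d → ℝ) ∈ F := by simpa using hFcone 0 le_rfl f hf
    have haddF : ∀ u ∈ F, ∀ v ∈ F, u + v ∈ F := by
      intro u hu v hv
      have hmid : (1/2 : ℝ) • u + (1/2 : ℝ) • v ∈ F :=
        hFconv hu hv (by norm_num) (by norm_num) (by norm_num)
      have := hFcone 2 (by norm_num) _ hmid
      simpa [smul_add, smul_smul] using this
    have hsumF : ∀ (g : Fin m × Fin n → Fin d → ℝ),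
        (∀ p ∈ Finset.univ, g p ∈ F) → ∑ p, g p ∈ F := by
      intro g hg
      exact Finset.sum_induction g (· ∈ F) (fun a b ha hb => haddF a ha b hb) h0F hg
    have hdouble : ∑ i, ∑ j,
        (μ i * lam j / A) • ((-(h (y j))) • x i + (h (x i)) • y j) ∈ F := by
      rw [← Finset.sum_product']
      apply hsumF
      intro p _
      exact hFcone _ (div_nonneg (mul_nonneg (hμ p.1) (hlam p.2)) hA0) _ (hw p.1 p.2)
    have hBA : B / A ≤ 1 := (div_le_one hApos).2 hAB
    refine ⟨f + ∑ i, ∑ j, (μ i * lam j / A) • ((-(h (y j))) • x i + (h (x i)) • y j),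
      haddF f hf _ hdouble, fun i => μ i * (1 - B / A),
      fun i => mul_nonneg (hμ i) (by linarith), ?_⟩
    have key : ∑ i, μ i • x i + ∑ j, lam j • y j =
        (∑ i, ∑ j, (μ i * lam j / A) • ((-(h (y j))) • x i + (h (x i)) • y j)) +
          ∑ i, (μ i * (1 - B / A)) • x i := by
      have e1 : ∀ i : Fin m, ∀ j : Fin n,
          (μ i * lam j / A) • ((-(h (y j))) • x i + (h (x i)) • y j) =
          (μ i * lam j / A * (-(h (y j)))) • x i + (μ i * lam j / A * h (x i)) • y j := by
        intro i j
        rw [smul_add, smul_smul, smul_smul]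
      simp_rw [e1, Finset.sum_add_distrib]
      have ex : ∑ i, ∑ j, (μ i * lam j / A * (-(h (y j)))) • x i =
          ∑ i, (μ i * (B / A)) • x i := by
        refine Finset.sum_congr rfl fun i _ => ?_
        rw [← Finset.sum_smul]
        congr 1
        rw [hB, ← mul_div_assoc, Finset.mul_sum, Finset.sum_div]
        exact Finset.sum_congr rfl fun j _ => by ring
      have ey : ∑ i, ∑ j, (μ i * lam j / A * h (x i)) • y j =
          ∑ j, lam j • y j := by
        rw [Finset.sum_comm]
        refine Finset.sum_congr rfl fun j _ => ?_
        rw [← Finset.sum_smul]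
        congr 1
        have : ∑ i, μ i * lam j / A * h (x i) = (lam j / A) * ∑ i, μ i * h (x i) := by
          rw [Finset.mul_sum]
          refine Finset.sum_congr rfl fun i _ => ?_
          ring
        rw [this, ← hA]
        field_simp
      rw [ex, ey]
      have exx : ∑ i, (μ i * (B / A)) • x i + ∑ i, (μ i * (1 - B / A)) • x i =
          ∑ i, μ i • x i := by
        rw [← Finset.sum_add_distrib]
        refine Finset.sum_congr rfl fun i _ => ?_
        rw [← add_smul]
        congr 1
        ring
      calc ∑ i, μ i • x i + ∑ j, lam j • y j
          = (∑ i, (μ i * (B / A)) • x i + ∑ i, (μ i * (1 - B / A)) • x i) +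
            ∑ j, lam j • y j := by rw [exx]
        _ = (∑ i, (μ i * (B / A)) • x i + ∑ j, lam j • y j) +
            ∑ i, (μ i * (1 - B / A)) • x i := by abel
    calc f + ∑ i, μ i • x i + ∑ j, lam j • y j
        = f + (∑ i, μ i • x i + ∑ j, lam j • y j) := by abel
      _ = f + ((∑ i, ∑ j, (μ i * lam j / A) • ((-(h (y j))) • x i + (h (x i)) • y j)) +
            ∑ i, (μ i * (1 - B / A)) • x i) := by rw [key]
      _ = (f + ∑ i, ∑ j, (μ i * lam j / A) • ((-(h (y j))) • x i + (h (x i)) • y j)) +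
            ∑ i, (μ i * (1 - B / A)) • x i := by abel

/-- Let `D₁, D₂ ⊆ ℝ^d` be pointed cones sharing the common facet
`F ⊆ H = ker h`, lying on opposite sides of the hyperplane `H`, with extremal
generators `x i` (resp. `y j`) not in `F`.  If every segment `[x i, y j]` meets
the relative interior of `F`, then `D₁ ∪ D₂` is convex (hence a cone). -/
theorem cone_union_convex_of_segments_meet_interior {d m n : ℕ}
    (h : (Fin d → ℝ) →ₗ[ℝ] ℝ) (hne : h ≠ 0)
    (F : Set (Fin d → ℝ)) (hFsub : F ⊆ {z | h z = 0})
    (hFconv : Convex ℝ F) (hFcone : ∀ c : ℝ, 0 ≤ c → ∀ z ∈ F, c • z ∈ F)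
    (x : Fin m → (Fin d → ℝ)) (y : Fin n → (Fin d → ℝ))
    (hx : ∀ i, 0 < h (x i)) (hy : ∀ j, h (y j) < 0)
    (D₁ D₂ : Set (Fin d → ℝ))
    (hD₁ : D₁ = {z | ∃ f ∈ F, ∃ c : Fin m → ℝ, (∀ i, 0 ≤ c i) ∧
      z = f + ∑ i, c i • x i})
    (hD₂ : D₂ = {z | ∃ f ∈ F, ∃ c : Fin n → ℝ, (∀ j, 0 ≤ c j) ∧
      z = f + ∑ j, c j • y j})
    (hpointed₁ : ∀ z ∈ D₁, -z ∈ D₁ → z = 0)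
    (hpointed₂ : ∀ z ∈ D₂, -z ∈ D₂ → z = 0)
    (hseg : ∀ i j, ∃ p ∈ segment ℝ (x i) (y j), p ∈ intrinsicInterior ℝ F) :
    Convex ℝ (D₁ ∪ D₂) := by
  -- the key points w i j ∈ F
  have hw : ∀ i j, (-(h (y j))) • x i + (h (x i)) • y j ∈ F := by
    intro i j
    obtain ⟨p, hpseg, hpint⟩ := hseg i j
    have hpF : p ∈ F := intrinsicInterior_subset hpint
    obtain ⟨s, t, hs, ht, hst, rfl⟩ := hpseg
    have hp0 : s * h (x i) + t * h (y j) = 0 := by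
      have := hFsub hpF
      simpa [map_add, map_smul] using this
    have hs' : s * (h (x i) - h (y j)) = -(h (y j)) := by
      linear_combination hp0 - h (y j) * hst
    have ht' : t * (h (x i) - h (y j)) = h (x i) := by
      linear_combination -hp0 + h (x i) * hst
    have hpos : (0:ℝ) ≤ h (x i) - h (y j) := by linarith [hx i, hy j]
    have := hFcone (h (x i) - h (y j)) hpos _ hpF
    have heq : (h (x i) - h (y j)) • (s • x i + t • y j) =
        (-(h (y j))) • x i + (h (x i)) • y j := by
      rw [smul_add, smul_smul, smul_smul, mul_comm _ s, mul_comm _ t, hs', ht']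
    rwa [heq] at this
  subst hD₁ hD₂
  intro z₁ hz₁ z₂ hz₂ a b ha hb hab
  -- convexity within D₁ / D₂
  have hconv₁ : ∀ f₁ ∈ F, ∀ f₂ ∈ F, ∀ (c e : Fin m → ℝ), (∀ i, 0 ≤ c i) → (∀ i, 0 ≤ e i) →
      a • (f₁ + ∑ i, c i • x i) + b • (f₂ + ∑ i, e i • x i) ∈
      {z | ∃ f ∈ F, ∃ c : Fin m → ℝ, (∀ i, 0 ≤ c i) ∧ z = f + ∑ i, c i • x i} := by
    intro f₁ hf₁ f₂ hf₂ c e hc he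
    refine ⟨a • f₁ + b • f₂, hFconv hf₁ hf₂ ha hb hab,
      fun i => a * c i + b * e i,
      fun i => add_nonneg (mul_nonneg ha (hc i)) (mul_nonneg hb (he i)), ?_⟩
    simp_rw [smul_add, Finset.smul_sum, smul_smul, add_smul, Finset.sum_add_distrib]
    abel
  have hconv₂ : ∀ f₁ ∈ F, ∀ f₂ ∈ F, ∀ (c e : Fin n → ℝ), (∀ j, 0 ≤ c j) → (∀ j, 0 ≤ e j) →
      a • (f₁ + ∑ j, c j • y j) + b • (f₂ + ∑ j, e j • y j) ∈
      {z | ∃ f ∈ F, ∃ c : Fin n → ℝ, (∀ j, 0 ≤ c j) ∧ z = f + ∑ j, c j • y j} := by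
    intro f₁ hf₁ f₂ hf₂ c e hc he
    refine ⟨a • f₁ + b • f₂, hFconv hf₁ hf₂ ha hb hab,
      fun j => a * c j + b * e j,
      fun j => add_nonneg (mul_nonneg ha (hc j)) (mul_nonneg hb (he j)), ?_⟩
    simp_rw [smul_add, Finset.smul_sum, smul_smul, add_smul, Finset.sum_add_distrib]
    abel
  -- mixed case, as a general claim
  have hmixed : ∀ a b : ℝ, 0 ≤ a → 0 ≤ b → a + b = 1 →
      ∀ f₁ ∈ F, ∀ f₂ ∈ F, ∀ (c : Fin m → ℝ) (e : Fin n → ℝ),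
      (∀ i, 0 ≤ c i) → (∀ j, 0 ≤ e j) →
      a • (f₁ + ∑ i, c i • x i) + b • (f₂ + ∑ j, e j • y j) ∈
      ({z | ∃ f ∈ F, ∃ c : Fin m → ℝ, (∀ i, 0 ≤ c i) ∧ z = f + ∑ i, c i • x i} ∪
       {z | ∃ f ∈ F, ∃ c : Fin n → ℝ, (∀ j, 0 ≤ c j) ∧ z = f + ∑ j, c j • y j}) := by
    intro a b ha hb hab f₁ hf₁ f₂ hf₂ c e hc he
    have hcomb : a • (f₁ + ∑ i, c i • x i) + b • (f₂ + ∑ j, e j • y j) =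
        (a • f₁ + b • f₂) + ∑ i, (a * c i) • x i + ∑ j, (b * e j) • y j := by
      simp_rw [smul_add, Finset.smul_sum, smul_smul]
      abel
    have haf : a • f₁ + b • f₂ ∈ F := hFconv hf₁ hf₂ ha hb hab
    have hμ : ∀ i, 0 ≤ a * c i := fun i => mul_nonneg ha (hc i)
    have hlam : ∀ j, 0 ≤ b * e j := fun j => mul_nonneg hb (he j)
    by_cases hcase : ∑ j, (b * e j) * (-(h (y j))) ≤ ∑ i, (a * c i) * h (x i)
    · obtain ⟨f', hf', c', hc', heq⟩ := cone_aux h F hFconv hFcone x y hx hy hw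
        _ haf _ _ hμ hlam hcase
      exact Or.inl ⟨f', hf', c', hc', by rw [hcomb]; exact heq⟩
    · push_neg at hcase
      have hx' : ∀ j, 0 < (-h) (y j) := by intro j; simpa using (hy j)
      have hy' : ∀ i, (-h) (x i) < 0 := by intro i; simpa using (hx i)
      have hw' : ∀ j i, (-((-h) (x i))) • y j + ((-h) (y j)) • x i ∈ F := by
        intro j i
        have := hw i j
        simpa [add_comm] using this
      have hcase' : ∑ i, (a * c i) * (-((-h) (x i))) ≤ ∑ j, (b * e j) * (-h) (y j) := by
        simpa using hcase.le
      obtain ⟨f', hf', c', hc', heq⟩ := cone_aux (-h) F hFconv hFcone y x hx' hy' hw'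
        _ haf _ _ hlam hμ hcase'
      refine Or.inr ⟨f', hf', c', hc', ?_⟩
      rw [hcomb]
      calc (a • f₁ + b • f₂) + ∑ i, (a * c i) • x i + ∑ j, (b * e j) • y j
          = (a • f₁ + b • f₂) + ∑ j, (b * e j) • y j + ∑ i, (a * c i) • x i := by abel
        _ = f' + ∑ j, c' j • y j := heq
  rcases hz₁ with ⟨f₁, hf₁, c, hc, rfl⟩ | ⟨f₁, hf₁, c, hc, rfl⟩ <;>
    rcases hz₂ with ⟨f₂, hf₂, e, he, rfl⟩ | ⟨f₂, hf₂, e, he, rfl⟩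
  · exact Or.inl (hconv₁ f₁ hf₁ f₂ hf₂ c e hc he)
  · exact hmixed a b ha hb hab f₁ hf₁ f₂ hf₂ c e hc he
  · have := hmixed b a hb ha (by linarith) f₂ hf₂ f₁ hf₁ e c he hc
    rwa [add_comm] at this
  · exact Or.inr (hconv₂ f₁ hf₁ f₂ hf₂ c e hc he)
end

section
/- Let D₁, D₂ ⊆ ℝ^d be pointed cones on opposite sides of the hyperplane H = ℝF of a common facet F, let γ ∈ int(F) ∖ {0}, and let x ∉ H, y ∉ H be points with x on the same side as D₁ and y on the same side as D₂. Then for all sufficiently large t ∈ ℕ, the segment [x + tγ, y + tγ] meets int(F). -/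
/-- Let `F` be a convex cone spanning the hyperplane `H = ker h`,
`γ ∈ int(F) ∖ {0}`, and let `x`, `y` lie strictly on the two opposite sides of
`H`.  Then for all sufficiently large `t ∈ ℕ`, the segment
`[x + tγ, y + tγ]` meets the relative interior of `F`. -/
theorem segment_meets_interior_for_large_t {d : ℕ}
    (h : (Fin d → ℝ) →ₗ[ℝ] ℝ) (hne : h ≠ 0)
    (F : Set (Fin d → ℝ)) (hFsub : F ⊆ {z | h z = 0})
    (hFconv : Convex ℝ F) (hFcone : ∀ c : ℝ, 0 ≤ c → ∀ z ∈ F, c • z ∈ F)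
    (hFspan : Submodule.span ℝ F = LinearMap.ker h)
    (γ : Fin d → ℝ) (hγ : γ ∈ intrinsicInterior ℝ F) (hγ0 : γ ≠ 0)
    (x y : Fin d → ℝ) (hx : 0 < h x) (hy : h y < 0) :
    ∃ T : ℕ, ∀ t : ℕ, T ≤ t →
      ∃ p ∈ segment ℝ (x + (t : ℝ) • γ) (y + (t : ℝ) • γ),
        p ∈ intrinsicInterior ℝ F := by
  classical
  have hγF : γ ∈ F := intrinsicInterior_subset hγ
  have h0F : (0 : Fin d → ℝ) ∈ F := by
    have := hFcone 0 le_rfl γ hγF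
    simpa using this
  have hγH : h γ = 0 := hFsub hγF
  -- the affine span of F, as a set, is the kernel of h
  have hspan_set : ((affineSpan ℝ F : AffineSubspace ℝ (Fin d → ℝ)) : Set (Fin d → ℝ))
      = {z | h z = 0} := by
    have h1 : (insert (0 : Fin d → ℝ) F) = F := Set.insert_eq_of_mem h0F
    have h2 := affineSpan_insert_zero (k := ℝ) F
    rw [h1] at h2
    rw [h2, hFspan]
    ext z
    simp [LinearMap.mem_ker]
  -- extract an ε-ball fact from intrinsic interior membership of γ
  obtain ⟨y0, hy0int, hy0coe⟩ := mem_intrinsicInterior.mp hγ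
  rw [mem_interior_iff_mem_nhds, Metric.mem_nhds_iff] at hy0int
  obtain ⟨ε, hε, hball⟩ := hy0int
  have keyA : ∀ v : Fin d → ℝ, h v = 0 → dist v γ < ε → v ∈ F := by
    intro v hv hdist
    have hvA : v ∈ affineSpan ℝ F := by
      rw [← SetLike.mem_coe, hspan_set]; exact hv
    have : (⟨v, hvA⟩ : affineSpan ℝ F) ∈ Metric.ball y0 ε := by
      rw [Metric.mem_ball, Subtype.dist_eq, hy0coe]
      exact hdist
    exact hball this
  -- converse: ball criterion implies intrinsic interior membership
  have keyB : ∀ p : Fin d → ℝ, h p = 0 → ∀ ε' : ℝ, 0 < ε' →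
      (∀ v : Fin d → ℝ, h v = 0 → dist v p < ε' → v ∈ F) →
      p ∈ intrinsicInterior ℝ F := by
    intro p hp ε' hε' hcrit
    have hpA : p ∈ affineSpan ℝ F := by
      rw [← SetLike.mem_coe, hspan_set]; exact hp
    rw [mem_intrinsicInterior]
    refine ⟨⟨p, hpA⟩, ?_, rfl⟩
    rw [mem_interior_iff_mem_nhds, Metric.mem_nhds_iff]
    refine ⟨ε', hε', ?_⟩
    intro u hu
    rw [Metric.mem_ball, Subtype.dist_eq] at hu
    have huH : h (u : Fin d → ℝ) = 0 := by
      have := u.2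
      rw [← SetLike.mem_coe, hspan_set] at this
      exact this
    exact hcrit u huH hu
  -- set up the crossing point
  set a := h x with ha
  set b := h y with hb
  have hab : 0 < a - b := by linarith
  set s : ℝ := -b / (a - b) with hs
  have hs0 : 0 < s := div_pos (by linarith) hab
  have hs1 : s < 1 := by
    rw [hs, div_lt_one hab]; linarith
  set w : Fin d → ℝ := s • x + (1 - s) • y with hw
  have hwH : h w = 0 := by
    have : s * a + (1 - s) * b = 0 := by
      rw [hs]; field_simp; ring
    simpa [hw, map_add, map_smul, smul_eq_mul, ← ha, ← hb] using this
  obtain ⟨N, hN⟩ := exists_nat_gt (2 * ‖w‖ / ε)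
  refine ⟨N + 1, ?_⟩
  intro t ht
  have ht1 : (1 : ℝ) ≤ (t : ℝ) := by exact_mod_cast Nat.one_le_iff_ne_zero.mpr (by omega)
  have htpos : (0 : ℝ) < (t : ℝ) := by linarith
  have htN : 2 * ‖w‖ / ε < (t : ℝ) := by
    have : (N : ℝ) + 1 ≤ (t : ℝ) := by exact_mod_cast ht
    linarith
  have hwt : ‖w‖ < (t : ℝ) * ε / 2 := by
    rw [div_lt_iff₀ hε] at htN
    nlinarith
  set p : Fin d → ℝ := w + (t : ℝ) • γ with hp
  have hpH : h p = 0 := by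
    simp [hp, map_add, map_smul, hwH, hγH]
  refine ⟨p, ?_, ?_⟩
  · -- segment membership
    refine ⟨s, 1 - s, hs0.le, by linarith, by ring, ?_⟩
    rw [hp, hw]
    module
  · -- intrinsic interior membership
    refine keyB p hpH (ε / 2) (by linarith) ?_
    intro v hv hdist
    set u : Fin d → ℝ := v - p with hu
    have huH : h u = 0 := by simp [hu, map_sub, hv, hpH]
    have hunorm : ‖u‖ < ε / 2 := by
      rw [hu, ← dist_eq_norm]; exact hdist
    set z : Fin d → ℝ := γ + ((t : ℝ)⁻¹) • (w + u) with hz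
    have hzH : h z = 0 := by
      simp [hz, map_add, map_smul, hγH, hwH, huH]
    have hzdist : dist z γ < ε := by
      rw [dist_eq_norm]
      have : z - γ = ((t : ℝ)⁻¹) • (w + u) := by rw [hz]; abel
      rw [this, norm_smul]
      have h1 : ‖w + u‖ ≤ ‖w‖ + ‖u‖ := norm_add_le _ _
      have h2 : ‖w‖ + ‖u‖ < (t : ℝ) * ε := by
        have : ε / 2 ≤ (t : ℝ) * ε / 2 := by nlinarith
        linarith
      have h3 : ‖((t : ℝ)⁻¹)‖ = (t : ℝ)⁻¹ := by
        rw [Real.norm_eq_abs, abs_of_pos (inv_pos.mpr htpos)]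
      rw [h3]
      calc (t : ℝ)⁻¹ * ‖w + u‖ ≤ (t : ℝ)⁻¹ * (‖w‖ + ‖u‖) := by
            apply mul_le_mul_of_nonneg_left h1 (inv_pos.mpr htpos).le
        _ < (t : ℝ)⁻¹ * ((t : ℝ) * ε) := by
            exact mul_lt_mul_of_pos_left h2 (inv_pos.mpr htpos)
        _ = ε := by field_simp
    have hzF : z ∈ F := keyA z hzH hzdist
    have : (t : ℝ) • z ∈ F := hFcone (t : ℝ) htpos.le z hzF
    have hvz : v = (t : ℝ) • z := by
      rw [hz, smul_add, smul_smul, mul_inv_cancel₀ (ne_of_gt htpos), one_smul]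
      rw [hu, hp]; abel
    rwa [hvz]
end

section
/- Let P ⊆ ℝ^d be a simplicial d-polytope with 0 ∈ int(P), let F = conv(v_{i₁},…,v_{i_d}) and G = conv(v_{i₁},…,v_{i_{d−1}}, v_{i_{d+1}}) be adjacent facets, and let λ be the unique solution of: λ_{i_d} v_{i_d} + λ_{i_{d+1}} v_{i_{d+1}} = λ_{i₁}v_{i₁} + ⋯ + λ_{i_{d−1}}v_{i_{d−1}}, λ_{i_d} + λ_{i_{d+1}} = 1, λ₀ + λ_{i₁} + ⋯ + λ_{i_{d−1}} = 1. Then automatically λ₀ > 0, λ_{i_d} > 0, and λ_{i_{d+1}} > 0. -/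
open scoped BigOperators

/-- Real realization of an integer vector. -/
def rz {d : ℕ} (z : Fin d → ℤ) : Fin d → ℝ := fun i => (z i : ℝ)

/-- for a simplicial polytope `P` with `0 ∈ int(P)` and adjacent
facets `F = conv(w₁,…,w_d, p)`, `G = conv(w₁,…,w_d, q)`, the coefficients of the
system `λ_p p + λ_q q = Σ λᵢ wᵢ`, `λ_p + λ_q = 1`, `λ₀ + Σ λᵢ = 1`
automatically satisfy `λ₀ > 0`, `λ_p > 0`, `λ_q > 0`. -/
theorem adjacent_facet_coefficients_positive {d N : ℕ}
    (v : Fin N → (Fin (d + 1) → ℤ))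
    (P : Set (Fin (d + 1) → ℝ)) (hP : P = convexHull ℝ (rz '' Set.range v))
    (h0 : (0 : Fin (d + 1) → ℝ) ∈ interior P)
    (w : Fin d → (Fin (d + 1) → ℤ)) (p q : Fin (d + 1) → ℤ)
    (hw : ∀ i, ∃ k, w i = v k) (hp : ∃ k, p = v k) (hq : ∃ k, q = v k)
    (hpq : p ≠ q)
    -- simpliciality of the facet `F`:
    (hFaffind : AffineIndependent ℝ (Fin.snoc (fun i => rz (w i)) (rz p)))
    -- `q` is not in the affine span of `F`:
    (hqF : rz q ∉ affineSpan ℝ (Set.range (Fin.snoc (fun i => rz (w i)) (rz p))))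
    -- `F` and `G` are facets, cut out by supporting hyperplanes:
    (φF φG : (Fin (d + 1) → ℝ) →ₗ[ℝ] ℝ)
    (hφF1 : ∀ i, φF (rz (w i)) = 1) (hφFp : φF (rz p) = 1)
    (hφFsupp : ∀ x ∈ P, φF x ≤ 1)
    (hφG1 : ∀ i, φG (rz (w i)) = 1) (hφGq : φG (rz q) = 1)
    (hφGsupp : ∀ x ∈ P, φG x ≤ 1)
    (lw : Fin d → ℝ) (lp lq l0 : ℝ)
    (heq : lp • rz p + lq • rz q = ∑ i, lw i • rz (w i))
    (hsum : lp + lq = 1)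
    (hsum0 : l0 + ∑ i, lw i = 1) :
    0 < l0 ∧ 0 < lp ∧ 0 < lq := by
  set f : Fin (d + 1) → (Fin (d + 1) → ℝ) := Fin.snoc (fun i => rz (w i)) (rz p) with hf
  have hPmem : ∀ z : Fin (d + 1) → ℤ, (∃ k, z = v k) → rz z ∈ P := by
    rintro z ⟨k, rfl⟩
    rw [hP]
    exact subset_convexHull ℝ _ ⟨v k, ⟨k, rfl⟩, rfl⟩
  have haq : φF (rz q) ≤ 1 := hφFsupp _ (hPmem q hq)
  have hbp : φG (rz p) ≤ 1 := hφGsupp _ (hPmem p hp)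
  -- strict inequality φF (rz q) < 1
  have haq' : φF (rz q) < 1 := by
    rcases lt_or_eq_of_le haq with h | h
    · exact h
    exfalso
    apply hqF
    have hφf : ∀ j, φF (f j) = 1 := by
      intro j
      refine Fin.lastCases ?_ ?_ j
      · simpa [hf] using hφFp
      · intro i; simpa [hf] using hφF1 i
    have hle : vectorSpan ℝ (Set.range f) ≤ LinearMap.ker φF := by
      rw [vectorSpan_def, Submodule.span_le]
      rintro x ⟨a, ⟨ja, rfl⟩, b, ⟨jb, rfl⟩, rfl⟩
      simp [LinearMap.mem_ker, vsub_eq_sub, map_sub, hφf]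
    have hsurj : Function.Surjective φF := by
      intro r
      exact ⟨r • rz p, by simp [map_smul, hφFp]⟩
    have hker_rank : Module.finrank ℝ (LinearMap.ker φF) = d := by
      have h1 := LinearMap.finrank_range_add_finrank_ker φF
      rw [LinearMap.range_eq_top.2 hsurj, finrank_top] at h1
      simp [Module.finrank_self, Module.finrank_pi] at h1
      omega
    have hvs_rank : Module.finrank ℝ (vectorSpan ℝ (Set.range f)) = d :=
      hFaffind.finrank_vectorSpan (by simp)
    have heqsub : vectorSpan ℝ (Set.range f) = LinearMap.ker φF :=
      Submodule.eq_of_le_of_finrank_le hle (by rw [hvs_rank, hker_rank])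
    have hpmem : rz p ∈ affineSpan ℝ (Set.range f) :=
      mem_affineSpan ℝ ⟨Fin.last d, by simp [hf]⟩
    have hdir : rz q - rz p ∈ (affineSpan ℝ (Set.range f)).direction := by
      rw [direction_affineSpan, heqsub, LinearMap.mem_ker, map_sub, hφFp, h]
      ring
    have := AffineSubspace.vadd_mem_of_mem_direction hdir hpmem
    simpa [vadd_eq_add, sub_add_cancel] using this
  -- apply φF and φG to heq
  have hA : lp + lq * φF (rz q) = 1 - l0 := by
    have h1 := congrArg φF heq
    simp only [map_add, map_smul, map_sum, smul_eq_mul, hφFp, hφF1, mul_one] at h1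
    linarith [h1, hsum0]
  have hB : lp * φG (rz p) + lq = 1 - l0 := by
    have h1 := congrArg φG heq
    simp only [map_add, map_smul, map_sum, smul_eq_mul, hφGq, hφG1, mul_one] at h1
    linarith [h1, hsum0]
  have hl0a : l0 = lq * (1 - φF (rz q)) := by linear_combination hA - hsum
  have hl0b : l0 = lp * (1 - φG (rz p)) := by linear_combination hB - hsum
  have h1a : 0 < 1 - φF (rz q) := by linarith
  rcases lt_or_eq_of_le hbp with hb | hb
  · -- main case
    have h1b : 0 < 1 - φG (rz p) := by linarith
    have hl0 : 0 < l0 := by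
      by_contra hc
      push_neg at hc
      have hlq : lq ≤ 0 := by
        rcases le_or_gt lq 0 with h | h
        · exact h
        · exfalso; nlinarith [mul_pos h h1a]
      have hlp : lp ≤ 0 := by
        rcases le_or_gt lp 0 with h | h
        · exact h
        · exfalso; nlinarith [mul_pos h h1b]
      linarith
    refine ⟨hl0, ?_, ?_⟩
    · rcases lt_or_ge 0 lp with h | h
      · exact h
      · exfalso; nlinarith [mul_nonneg (neg_nonneg.2 h) h1b.le]
    · rcases lt_or_ge 0 lq with h | h
      · exact h
      · exfalso; nlinarith [mul_nonneg (neg_nonneg.2 h) h1a.le]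
  · -- degenerate case: φG p = 1, contradiction with affine independence
    exfalso
    have hl0 : l0 = 0 := by rw [hl0b, ← hb]; ring
    have hlq : lq = 0 := by
      have h2 : lq * (1 - φF (rz q)) = 0 := by rw [← hl0a, hl0]
      rcases mul_eq_zero.1 h2 with h | h
      · exact h
      · exfalso; linarith
    have hlp : lp = 1 := by linarith
    rw [affineIndependent_iff] at hFaffind
    set c : Fin (d + 1) → ℝ := Fin.snoc lw (-1) with hc
    have hcsum : ∑ j, c j = 0 := by
      rw [Fin.sum_univ_castSucc]
      simp only [hc, Fin.snoc_castSucc, Fin.snoc_last]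
      linarith
    have hcvec : ∑ j, c j • f j = 0 := by
      rw [Fin.sum_univ_castSucc]
      simp only [hc, hf, Fin.snoc_castSucc, Fin.snoc_last]
      have hpe : rz p = ∑ i, lw i • rz (w i) := by
        rw [← heq, hlp, hlq]
        simp
      rw [← hpe]
      simp
    have := hFaffind Finset.univ c hcsum hcvec (Fin.last d) (Finset.mem_univ _)
    simp [hc] at this
end
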